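/- arXiv:1009.4943 — 3 statements merged into one kernel-verified Lean document; each statement's English description precedes it below -/
import Mathlib

section
/- In a finite R-trivial monoid, (x^ω y^ω)^ω = (x^ω y^ω)^ω · (xy) for all x, y. -/
/-!
Put `e = (x^a y^b)^c`. In an R-trivial monoid, `e * u * s = e` forces `e * u = e`, since then `e`
and `e * u` generate the same right ideal. As `e` is idempotent and begins with `x`, we get
`e = e * e = e * x * s`, hence `e * x = e`, and so `e * x^a = e`. Then `e = e * e = e * y^b * s'`
begins with `e * y`, hence `e * y = e` as well.
-/

def IsRTrivial (M : Type*) [Monoid M] : Prop :=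
  ∀ a b : M, {z : M | ∃ s : M, a * s = z} = {z : M | ∃ s : M, b * s = z} → a = b

namespace IsRTrivial

variable {M : Type*} [Monoid M]

theorem mul_eq_self_of_mul_mul_eq_self (hM : IsRTrivial M) {e u s : M} (h : e * u * s = e) :
    e * u = e := by
  refine hM _ _ (Set.ext fun z => ⟨?_, ?_⟩)
  · rintro ⟨t, rfl⟩
    exact ⟨u * t, (mul_assoc e u t).symm⟩
  · rintro ⟨t, rfl⟩
    exact ⟨s * t, by rw [← mul_assoc, h]⟩

end IsRTrivial

theorem mul_pow_eq_self_of_mul_eq_self {M : Type*} [Monoid M] {e u : M} (h : e * u = e) (n : ℕ) :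
    e * u ^ n = e := by
  induction n with
  | zero => rw [pow_zero, mul_one]
  | succ n ih => rw [pow_succ, ← mul_assoc, ih, h]

theorem pow_idem_prod_mul_general (M : Type*) [Monoid M]
    (hR : ∀ a b : M, {z : M | ∃ s : M, a * s = z} = {z : M | ∃ s : M, b * s = z} → a = b)
    (x y : M) (a b c : ℕ) (ha : 0 < a) (hb : 0 < b) (hc : 0 < c)
    (habc : (x ^ a * y ^ b) ^ c * (x ^ a * y ^ b) ^ c = (x ^ a * y ^ b) ^ c) :
    (x ^ a * y ^ b) ^ c = (x ^ a * y ^ b) ^ c * (x * y) := by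
  obtain ⟨a, rfl⟩ := Nat.exists_eq_add_one_of_ne_zero ha.ne'
  obtain ⟨b, rfl⟩ := Nat.exists_eq_add_one_of_ne_zero hb.ne'
  obtain ⟨c, rfl⟩ := Nat.exists_eq_add_one_of_ne_zero hc.ne'
  set w := (x ^ (a + 1) * y ^ (b + 1)) ^ c
  set e := (x ^ (a + 1) * y ^ (b + 1)) ^ (c + 1)
  have he : e = x ^ (a + 1) * y ^ (b + 1) * w := pow_succ' _ _
  have hex : e * x = e :=
    IsRTrivial.mul_eq_self_of_mul_mul_eq_self hR (s := x ^ a * y ^ (b + 1) * w) <|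
    calc e * x * (x ^ a * y ^ (b + 1) * w) = e * (x ^ (a + 1) * y ^ (b + 1) * w) := by
          rw [pow_succ' x a]; simp only [mul_assoc]
      _ = e := by rw [← he, habc]
  have hey : e * y = e :=
    IsRTrivial.mul_eq_self_of_mul_mul_eq_self hR (s := y ^ b * w) <|
    calc e * y * (y ^ b * w) = e * x ^ (a + 1) * (y ^ (b + 1) * w) := by
          rw [mul_pow_eq_self_of_mul_eq_self hex, pow_succ' y b, mul_assoc, mul_assoc]
      _ = e := by rw [mul_assoc, ← mul_assoc (x ^ (a + 1)), ← he, habc]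
  rw [← mul_assoc, hex, hey]

/-- In a finite R-trivial monoid, `(x^ω y^ω)^ω = (x^ω y^ω)^ω * (xy)`. -/
theorem pow_idem_prod_mul (M : Type*) [Monoid M] [Finite M]
    (hR : ∀ a b : M, {z : M | ∃ s : M, a * s = z} = {z : M | ∃ s : M, b * s = z} → a = b)
    (x y : M) (a b c : ℕ) (ha : 0 < a) (hb : 0 < b) (hc : 0 < c)
    (hxa : x ^ a * x ^ a = x ^ a)
    (hyb : y ^ b * y ^ b = y ^ b)
    (habc : (x ^ a * y ^ b) ^ c * (x ^ a * y ^ b) ^ c = (x ^ a * y ^ b) ^ c) :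
    (x ^ a * y ^ b) ^ c = (x ^ a * y ^ b) ^ c * (x * y) :=
  pow_idem_prod_mul_general M hR x y a b c ha hb hc habc
end

section
/- Let S be a finite R-trivial monoid and u ∈ S. Any two maximal elements e, f (with respect to the preorder u ≤ v iff ∃ w, uw = v) of the set {s ∈ S : us = u} satisfy {a : ae = a} = {a : af = a}; moreover any such maximal element e is idempotent. -/
/-!
The set `{s : u * s = u}` is a submonoid, so if `e` is maximal in it and `s` lies in it, then
`e * s` lies in it too and sits above `e`, hence `e * s = e`. Taking `s = e` gives idempotence;
taking `s = f` (and symmetrically) gives `e * f = e` and `f * e = f`, which make `a * e = a` and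
`a * f = a` equivalent.
-/

section

variable {M : Type*} [Monoid M]

def rightStabilizer (u : M) : Submonoid M where
  carrier := {s | u * s = u}
  one_mem' := mul_one u
  mul_mem' {s t} hs ht := by
    change u * (s * t) = u
    rw [← mul_assoc, hs, ht]

theorem mul_eq_self_of_maximal_mem_rightStabilizer {u e s : M} (he : e ∈ rightStabilizer u)
    (hemax : ∀ t : M, t ∈ rightStabilizer u → (∃ w : M, e * w = t) → e = t)
    (hs : s ∈ rightStabilizer u) : e * s = e :=
  (hemax (e * s) ((rightStabilizer u).mul_mem he hs) ⟨s, rfl⟩).symm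

theorem mul_eq_self_of_mul_eq_self_of_mul_eq {a e f : M} (ha : a * e = a) (hef : e * f = e) :
    a * f = a := by
  rw [← ha, mul_assoc, hef]

end

theorem D_well_defined_general (M : Type*) [Monoid M]
    (u e f : M)
    (he : u * e = u) (hemax : ∀ s : M, u * s = u → (∃ w : M, e * w = s) → e = s)
    (hf : u * f = u) (hfmax : ∀ s : M, u * s = u → (∃ w : M, f * w = s) → f = s) :
    {a : M | a * e = a} = {a : M | a * f = a} ∧ e * e = e := by
  have hef : e * f = e := mul_eq_self_of_maximal_mem_rightStabilizer he hemax hf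
  have hfe : f * e = f := mul_eq_self_of_maximal_mem_rightStabilizer hf hfmax he
  refine ⟨?_, mul_eq_self_of_maximal_mem_rightStabilizer he hemax he⟩
  ext a
  exact ⟨fun ha => mul_eq_self_of_mul_eq_self_of_mul_eq ha hef,
    fun ha => mul_eq_self_of_mul_eq_self_of_mul_eq ha hfe⟩

/-- In a finite R-trivial monoid, any two maximal elements `e, f` of
`{s : us = u}` (for the preorder `x ≤ y ↔ ∃ w, xw = y`) satisfy
`{a : ae = a} = {a : af = a}`, and any such maximal element is idempotent. -/
theorem D_well_defined (M : Type*) [Monoid M] [Finite M]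
    (hR : ∀ a b : M, {z : M | ∃ s : M, a * s = z} = {z : M | ∃ s : M, b * s = z} → a = b)
    (u e f : M)
    (he : u * e = u) (hemax : ∀ s : M, u * s = u → (∃ w : M, e * w = s) → e = s)
    (hf : u * f = u) (hfmax : ∀ s : M, u * s = u → (∃ w : M, f * w = s) → f = s) :
    {a : M | a * e = a} = {a : M | a * f = a} ∧ e * e = e :=
  D_well_defined_general M u e f he hemax hf hfmax
end

section
/- Every weakly ordered monoid is R-trivial; equivalently, in a weakly ordered monoid the relation u ≤ v iff ∃w, uw = v is antisymmetric. -/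
/-!
If `x M = y M`, write `y = x s` and `x = y t`; then `x s t = x`, so the weak-order axioms give
`C s ≤ D x` and hence `x s = x`, i.e. `y = x`.
-/

theorem eq_of_mul_eq_of_mul_eq {M : Type*} [Monoid M]
    (hM : ∀ u v : M, (∃ w : M, u * v * w = u) → u * v = u)
    {x y s t : M} (hs : x * s = y) (ht : y * t = x) : x = y := by
  have hst : x * s * t = x := by rw [hs, ht]
  rw [← hs, hM x s ⟨t, hst⟩]

theorem self_mem_setOf_mul_eq {M : Type*} [Monoid M] (x : M) :
    x ∈ {z : M | ∃ s : M, x * s = z} :=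
  ⟨1, mul_one x⟩

theorem weaklyOrdered_is_rtrivial_general (M : Type*) [Monoid M]
    (L : Type*) [SemilatticeSup L]
    (C D : M → L)
    (h3 : ∀ u v : M, (∃ w : M, u * v * w = u) → C v ≤ D u)
    (h4 : ∀ u v : M, C v ≤ D u → u * v = u) :
    ∀ x y : M, {z : M | ∃ s : M, x * s = z} = {z : M | ∃ s : M, y * s = z} → x = y := by
  intro x y h
  obtain ⟨s, hs⟩ : y ∈ {z : M | ∃ s : M, x * s = z} := h ▸ self_mem_setOf_mul_eq y
  obtain ⟨t, ht⟩ : x ∈ {z : M | ∃ s : M, y * s = z} := h ▸ self_mem_setOf_mul_eq x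
  exact eq_of_mul_eq_of_mul_eq (fun u v hw => h4 u v (h3 u v hw)) hs ht

/-- Every weakly ordered monoid is R-trivial. -/
theorem weaklyOrdered_is_rtrivial (M : Type*) [Monoid M] [Finite M]
    (L : Type*) [SemilatticeSup L] [Finite L]
    (C D : M → L)
    (hC : ∀ u v : M, C (u * v) = C u ⊔ C v)
    (hCsurj : Function.Surjective C)
    (h3 : ∀ u v : M, (∃ w : M, u * v * w = u) → C v ≤ D u)
    (h4 : ∀ u v : M, C v ≤ D u → u * v = u) :
    ∀ x y : M, {z : M | ∃ s : M, x * s = z} = {z : M | ∃ s : M, y * s = z} → x = y :=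
  weaklyOrdered_is_rtrivial_general M L C D h3 h4
end
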